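/- arXiv:2406.11649 — 2 statements merged into one kernel-verified Lean document; each statement's English description precedes it below -/
import Mathlib

section
/- Let z ≥ 1 be an integer and α ∈ (0,1]. Let P be a nonempty finite multiset of points of the closed unit ball B(0,1) ⊆ ℝ^d, let e > 0 with |P| ≥ 2e, let n ∈ ℝ with |n − |P|| ≤ e, and let S ∈ ℝ^d with ‖S − ∑_{p∈P} p‖ ≤ e. Then for every point m ∈ ℝ^d, ∑_{p∈P} ‖p − S/n‖^z ≤ (1+α)·2^z·∑_{p∈P} ‖p − m‖^z + 5^z·(4z/α)^{z−1}·e. -/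
/-!
Let `c` be the true centroid of `P`. Since `|n - |P|| ≤ e ≤ |P|/2`, the noisy centroid `S/n` lies
within `4e/|P|` of `c`. All points and both centers lie in the ball of radius `3`, so by the mean
value bound for `t ↦ t^z` on `[0, 4]` moving the center from `c` to `S/n` raises each term by at
most `z·4^(z-1)·4e/|P|`, i.e. the cost by at most `z·4^z·e`. The centroid is a `2^z`-approximate
optimal center: `‖p - c‖^z ≤ 2^(z-1)(‖p - m‖^z + ‖m - c‖^z)` and, by the power-mean inequality,
`|P|·‖m - c‖^z ≤ ∑ ‖p - m‖^z`. Finally `z·4^z ≤ 5^z (4z/α)^(z-1)` follows from Bernoulli's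
inequality `4z ≤ 5^z` and `4 ≤ 4z/α`.
-/

theorem norm_inv_smul_sub_inv_smul_le {E : Type*} [NormedAddCommGroup E] [NormedSpace ℝ E]
    {S T : E} {n N e : ℝ} (hn : 0 < n) (hN : 0 < N) (hT : ‖T‖ ≤ N) (hnN : |n - N| ≤ e)
    (hST : ‖S - T‖ ≤ e) : ‖n⁻¹ • S - N⁻¹ • T‖ ≤ 2 * e / n := by
  have hsplit : n⁻¹ • S - N⁻¹ • T = n⁻¹ • (S - T) + (n⁻¹ - N⁻¹) • T := by
    rw [smul_sub, sub_smul]; abel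
  have hinv : |n⁻¹ - N⁻¹| = |n - N| / (n * N) := by
    rw [inv_sub_inv hn.ne' hN.ne', abs_div, abs_sub_comm, abs_of_pos (mul_pos hn hN)]
  have he : 0 ≤ e := (abs_nonneg _).trans hnN
  calc ‖n⁻¹ • S - N⁻¹ • T‖ ≤ ‖n⁻¹ • (S - T)‖ + ‖(n⁻¹ - N⁻¹) • T‖ := hsplit ▸ norm_add_le _ _
    _ = n⁻¹ * ‖S - T‖ + |n⁻¹ - N⁻¹| * ‖T‖ := by
      rw [norm_smul, norm_smul, Real.norm_eq_abs, Real.norm_eq_abs, abs_of_pos (inv_pos.mpr hn)]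
    _ ≤ n⁻¹ * e + e / (n * N) * N := by rw [hinv]; gcongr
    _ = 2 * e / n := by field_simp; ring

theorem natCast_mul_four_pow_le {z : ℕ} {α : ℝ} (hz : 1 ≤ z) (hα0 : 0 < α) (hα1 : α ≤ 1) :
    (z : ℝ) * 4 ^ z ≤ 5 ^ z * (4 * z / α) ^ (z - 1) := by
  have hz' : (1 : ℝ) ≤ z := by exact_mod_cast hz
  have hbernoulli : 4 * (z : ℝ) ≤ 5 ^ z := by
    have := one_add_mul_le_pow (a := (4 : ℝ)) (by norm_num) z
    norm_num at this; linarith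
  have hbase : (4 : ℝ) ≤ 4 * z / α := by rw [le_div_iff₀ hα0]; nlinarith
  calc (z : ℝ) * 4 ^ z = 4 * z * 4 ^ (z - 1) := by
        rw [mul_comm 4 (z : ℝ), mul_assoc, mul_pow_sub_one (by omega)]
    _ ≤ 5 ^ z * (4 * z / α) ^ (z - 1) := by gcongr

namespace Multiset

theorem sum_map_eq_sum_coe {ι β : Type*} [DecidableEq ι] [AddCommMonoid β] (P : Multiset ι)
    (f : ι → β) : (P.map f).sum = ∑ i : P, f i := by
  rw [Finset.sum_eq_multiset_sum, map_univ]

theorem pow_sum_map_le_card_pow_mul_sum_map_pow {ι α : Type*} [CommSemiring α] [LinearOrder α]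
    [IsStrictOrderedRing α] [ExistsAddOfLE α] (P : Multiset ι) {f : ι → α}
    (hf : ∀ i ∈ P, 0 ≤ f i) (k : ℕ) :
    (P.map f).sum ^ (k + 1) ≤ (card P : α) ^ k * (P.map (f · ^ (k + 1))).sum := by
  classical
  simpa [sum_map_eq_sum_coe] using
    pow_sum_le_card_mul_sum_pow (s := Finset.univ) (f := fun i : P => f i)
      (fun i _ => hf i coe_mem) k

variable {E : Type*} [NormedAddCommGroup E]

def clusterCost (P : Multiset E) (z : ℕ) (x : E) : ℝ := (P.map fun p => ‖p - x‖ ^ z).sum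

theorem clusterCost_nonneg (P : Multiset E) (z : ℕ) (x : E) : 0 ≤ P.clusterCost z x :=
  sum_nonneg fun _ hy => by
    obtain ⟨p, -, rfl⟩ := mem_map.mp hy
    positivity

theorem norm_sum_le_card_mul {P : Multiset E} {r : ℝ} (h : ∀ p ∈ P, ‖p‖ ≤ r) :
    ‖P.sum‖ ≤ card P * r :=
  calc ‖P.sum‖ ≤ (P.map (‖·‖)).sum := norm_multiset_sum_le P
    _ ≤ (P.map fun _ => r).sum := sum_map_le_sum_map _ _ h
    _ = card P * r := by simp

theorem clusterCost_le_add {P : Multiset E} {z : ℕ} {R : ℝ} {x y : E}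
    (hx : ∀ p ∈ P, ‖p - x‖ ≤ R) (hy : ∀ p ∈ P, ‖p - y‖ ≤ R) :
    P.clusterCost z x ≤ P.clusterCost z y + card P * (z * R ^ (z - 1) * ‖x - y‖) := by
  have hpoint : ∀ p ∈ P, ‖p - x‖ ^ z ≤ ‖p - y‖ ^ z + z * R ^ (z - 1) * ‖x - y‖ := by
    intro p hp
    have hdiff : |‖p - x‖ - ‖p - y‖| ≤ ‖x - y‖ := by
      simpa [norm_sub_rev] using abs_norm_sub_norm_le (p - x) (p - y)
    have hmax : max |‖p - x‖| |‖p - y‖| ≤ R := by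
      simpa only [abs_norm] using max_le (hx p hp) (hy p hp)
    have := (le_abs_self _).trans (abs_pow_sub_pow_le (‖p - x‖) (‖p - y‖) z)
    calc ‖p - x‖ ^ z
        ≤ ‖p - y‖ ^ z + |‖p - x‖ - ‖p - y‖| * z * max |‖p - x‖| |‖p - y‖| ^ (z - 1) := by
          linarith
      _ ≤ ‖p - y‖ ^ z + ‖x - y‖ * z * R ^ (z - 1) := by gcongr
      _ = _ := by ring
  calc P.clusterCost z x ≤ (P.map fun p => ‖p - y‖ ^ z + z * R ^ (z - 1) * ‖x - y‖).sum :=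
        sum_map_le_sum_map _ _ hpoint
    _ = _ := by simp [clusterCost, sum_map_add]

variable [NormedSpace ℝ E]

/-- Equal to `0` for the empty multiset. -/
noncomputable def centroid (P : Multiset E) : E := (card P : ℝ)⁻¹ • P.sum

variable {P : Multiset E}

theorem norm_centroid_le {r : ℝ} (hr : 0 ≤ r) (h : ∀ p ∈ P, ‖p‖ ≤ r) : ‖P.centroid‖ ≤ r := by
  rcases eq_or_ne P 0 with rfl | hP
  · simpa [centroid] using hr
  have hN : (0 : ℝ) < card P := by exact_mod_cast card_pos.mpr hP
  rw [centroid, norm_smul, norm_inv, Real.norm_natCast, inv_mul_le_iff₀ hN]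
  exact norm_sum_le_card_mul h

theorem card_mul_norm_sub_centroid_pow_le (m : E) (z : ℕ) :
    card P * ‖m - P.centroid‖ ^ z ≤ P.clusterCost z m := by
  rcases eq_or_ne P 0 with rfl | hP
  · simp [clusterCost]
  obtain _ | k := z
  · simp [clusterCost]
  set N : ℝ := (card P : ℝ)
  have hN : 0 < N := Nat.cast_pos.mpr (card_pos.mpr hP)
  have hm : m - P.centroid = N⁻¹ • (P.map (m - ·)).sum := by
    rw [sum_map_sub, map_const', sum_replicate, centroid, smul_sub, map_id',
      ← Nat.cast_smul_eq_nsmul ℝ, smul_smul, inv_mul_cancel₀ hN.ne', one_smul]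
  have hnorm : ‖m - P.centroid‖ ≤ N⁻¹ * (P.map (‖· - m‖)).sum := by
    rw [hm, norm_smul, norm_inv, Real.norm_natCast]
    gcongr
    simpa [Function.comp_def, norm_sub_rev] using norm_multiset_sum_le (P.map (m - ·))
  calc N * ‖m - P.centroid‖ ^ (k + 1)
      ≤ N * (N⁻¹ * (P.map (‖· - m‖)).sum) ^ (k + 1) := by gcongr
    _ = N⁻¹ ^ k * (P.map (‖· - m‖)).sum ^ (k + 1) := by
      rw [mul_pow, pow_succ N⁻¹]; field_simp
    _ ≤ N⁻¹ ^ k * (N ^ k * P.clusterCost (k + 1) m) := by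
      gcongr
      exact pow_sum_map_le_card_pow_mul_sum_map_pow P (fun _ _ => norm_nonneg _) k
    _ = P.clusterCost (k + 1) m := by
      rw [← mul_assoc, ← mul_pow, inv_mul_cancel₀ hN.ne', one_pow, one_mul]

theorem clusterCost_centroid_le {z : ℕ} (hz : 1 ≤ z) (m : E) :
    P.clusterCost z P.centroid ≤ 2 ^ z * P.clusterCost z m := by
  have hpoint : ∀ p ∈ P,
      ‖p - P.centroid‖ ^ z ≤ 2 ^ (z - 1) * (‖p - m‖ ^ z + ‖m - P.centroid‖ ^ z) := fun p _ =>
    calc ‖p - P.centroid‖ ^ z ≤ (‖p - m‖ + ‖m - P.centroid‖) ^ z := by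
          gcongr; exact norm_sub_le_norm_sub_add_norm_sub p m _
      _ ≤ _ := add_pow_le (norm_nonneg _) (norm_nonneg _) z
  calc P.clusterCost z P.centroid
      ≤ (P.map fun p => 2 ^ (z - 1) * (‖p - m‖ ^ z + ‖m - P.centroid‖ ^ z)).sum :=
        sum_map_le_sum_map _ _ hpoint
    _ = 2 ^ (z - 1) * (P.clusterCost z m + card P * ‖m - P.centroid‖ ^ z) := by
      simp [clusterCost, sum_map_mul_left, sum_map_add]
    _ ≤ 2 ^ (z - 1) * (P.clusterCost z m + P.clusterCost z m) := by
      gcongr; exact card_mul_norm_sub_centroid_pow_le m z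
    _ = 2 ^ z * P.clusterCost z m := by
      rw [← two_mul, ← mul_assoc, ← pow_succ, Nat.sub_add_cancel hz]

theorem norm_inv_smul_sub_centroid_le {S : E} {n e : ℝ} (hP : ∀ p ∈ P, ‖p‖ ≤ 1) (he : 0 < e)
    (hcard : 2 * e ≤ card P) (hn : |n - card P| ≤ e) (hS : ‖S - P.sum‖ ≤ e) :
    ‖n⁻¹ • S - P.centroid‖ ≤ 4 * e / card P := by
  have hN : (0 : ℝ) < card P := by linarith
  have hn2 : (card P : ℝ) / 2 ≤ n := by linarith [(abs_le.mp hn).1]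
  have hn0 : 0 < n := by linarith
  calc ‖n⁻¹ • S - P.centroid‖ ≤ 2 * e / n :=
        norm_inv_smul_sub_inv_smul_le hn0 hN (by simpa using norm_sum_le_card_mul hP) hn hS
    _ ≤ 4 * e / card P := by rw [div_le_div_iff₀ hn0 hN]; nlinarith

end Multiset

theorem noisy_centroid_cost_z_general {d : ℕ} (z : ℕ) (hz : 1 ≤ z)
    (α : ℝ) (hα0 : 0 < α) (hα1 : α ≤ 1)
    (P : Multiset (EuclideanSpace ℝ (Fin d)))
    (hball : ∀ p ∈ P, p ∈ Metric.closedBall (0 : EuclideanSpace ℝ (Fin d)) 1)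
    (e : ℝ) (he : 0 < e) (hcard : 2 * e ≤ (P.card : ℝ))
    (n : ℝ) (hn : |n - (P.card : ℝ)| ≤ e)
    (S : EuclideanSpace ℝ (Fin d)) (hS : ‖S - P.sum‖ ≤ e)
    (m : EuclideanSpace ℝ (Fin d)) :
    (P.map (fun p => ‖p - n⁻¹ • S‖ ^ z)).sum
      ≤ (1 + α) * 2 ^ z * (P.map (fun p => ‖p - m‖ ^ z)).sum
        + 5 ^ z * (4 * z / α) ^ (z - 1) * e := by
  set N : ℝ := (P.card : ℝ)
  set x := n⁻¹ • S
  have hN : 0 < N := by linarith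
  have hunit : ∀ p ∈ P, ‖p‖ ≤ 1 := by simpa using hball
  have hδ : ‖x - P.centroid‖ ≤ 4 * e / N := P.norm_inv_smul_sub_centroid_le hunit he hcard hn hS
  have hδ2 : 4 * e / N ≤ 2 := by rw [div_le_iff₀ hN]; linarith
  have hc : ‖P.centroid‖ ≤ 1 := Multiset.norm_centroid_le zero_le_one hunit
  have hx : ‖x‖ ≤ 3 := by linarith [norm_le_norm_add_norm_sub' x P.centroid]
  have hnoise : N * (z * 4 ^ (z - 1) * ‖x - P.centroid‖) ≤ z * 4 ^ z * e :=
    calc N * (z * 4 ^ (z - 1) * ‖x - P.centroid‖) ≤ N * (z * 4 ^ (z - 1) * (4 * e / N)) := by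
          gcongr
      _ = z * (4 ^ (z - 1) * 4) * e := by field_simp
      _ = z * 4 ^ z * e := by rw [pow_sub_one_mul (by omega)]
  show P.clusterCost z x ≤ (1 + α) * 2 ^ z * P.clusterCost z m + _
  calc P.clusterCost z x
      ≤ P.clusterCost z P.centroid + N * (z * 4 ^ (z - 1) * ‖x - P.centroid‖) :=
        Multiset.clusterCost_le_add (fun p hp => by linarith [norm_sub_le p x, hunit p hp])
          (fun p hp => by linarith [norm_sub_le p P.centroid, hunit p hp])
    _ ≤ 2 ^ z * P.clusterCost z m + z * 4 ^ z * e :=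
      add_le_add (Multiset.clusterCost_centroid_le hz m) hnoise
    _ ≤ (1 + α) * 2 ^ z * P.clusterCost z m + 5 ^ z * (4 * z / α) ^ (z - 1) * e := by
      have hα : 2 ^ z * P.clusterCost z m ≤ (1 + α) * 2 ^ z * P.clusterCost z m := by
        rw [mul_assoc]
        exact le_mul_of_one_le_left (mul_nonneg (by positivity) (P.clusterCost_nonneg z m))
          (by linarith)
      exact add_le_add hα (mul_le_mul_of_nonneg_right (natCast_mul_four_pow_le hz hα0 hα1) he.le)

/-- **`(1,z)`-clustering cost of the noisy centroid.** Let `z ≥ 1` be an integer and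
`α ∈ (0,1]`.  Let `P` be a nonempty finite multiset of points of the closed unit ball of
`ℝ^d`, let `e > 0` with `|P| ≥ 2e`, let `n ∈ ℝ` with `|n − |P|| ≤ e`, and let `S ∈ ℝ^d`
with `‖S − ∑_{p∈P} p‖ ≤ e`.  Then for every point `m ∈ ℝ^d`,
`∑_{p∈P} ‖p − S/n‖^z ≤ (1+α)·2^z·∑_{p∈P} ‖p − m‖^z + 5^z·(4z/α)^{z−1}·e`. -/
theorem noisy_centroid_cost_z {d : ℕ} (z : ℕ) (hz : 1 ≤ z)
    (α : ℝ) (hα0 : 0 < α) (hα1 : α ≤ 1)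
    (P : Multiset (EuclideanSpace ℝ (Fin d))) (hP : P ≠ 0)
    (hball : ∀ p ∈ P, p ∈ Metric.closedBall (0 : EuclideanSpace ℝ (Fin d)) 1)
    (e : ℝ) (he : 0 < e) (hcard : 2 * e ≤ (P.card : ℝ))
    (n : ℝ) (hn : |n - (P.card : ℝ)| ≤ e)
    (S : EuclideanSpace ℝ (Fin d)) (hS : ‖S - P.sum‖ ≤ e)
    (m : EuclideanSpace ℝ (Fin d)) :
    (P.map (fun p => ‖p - n⁻¹ • S‖ ^ z)).sum
      ≤ (1 + α) * 2 ^ z * (P.map (fun p => ‖p - m‖ ^ z)).sum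
        + 5 ^ z * (4 * z / α) ^ (z - 1) * e :=
  noisy_centroid_cost_z_general z hz α hα0 hα1 P hball e he hcard n hn S hS m
end

section
/- Let (X, dist) be a metric space, let Y ⊆ X have diameter at most 1, let z ≥ 1 and k, k' ≥ 1 be integers, let α > 0, e ≥ 0, M ≥ 0, A ≥ 0 and M' ≥ 0 be reals. Let P be a finite multiset of points of Y, let S = {s_1, …, s_{k'}} ⊆ Y, and let P = P_1 ⊔ … ⊔ P_{k'} be a partition of P into Voronoi clusters of S, i.e., dist(p, s_i) = dist(p, S) for every i and every p ∈ P_i. Let Γ* ⊆ Y be a set with |Γ*| = k such that cost_z(P, S) ≤ M·cost_z(P, Γ*) + A. Let n_1, …, n_{k'} ≥ 0 be reals with |n_i − |P_i|| ≤ e for each i, and let C ⊆ Y with |C| = k satisfy ∑_i n_i·dist(s_i, C)^z ≤ M'·∑_i n_i·dist(s_i, Γ*)^z. Then cost_z(P, C) ≤ (1+1/α)^{z−1}·(1 + (1+α)^{z−1}·M')·(M·cost_z(P, Γ*) + A) + (1+α)^{2(z−1)}·M'·cost_z(P, Γ*) + (1+α)^{z−1}·(M'+1)·k'·e. -/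
/-!
With `B = (1 + 1/α)^(z-1)` and `G = (1 + α)^(z-1)`, convexity of `t ↦ t^z` with the weights
`1/(1 + 1/α) + 1/(1 + α) = 1` gives the relaxed triangle inequality `(a + b)^z ≤ B a^z + G b^z`.
Moving each point of a Voronoi cluster `P_i` to its center `s_i` then gives
`cost_z(P, C) ≤ B cost_z(P, S) + G ∑ |P_i| dist(s_i, C)^z`, and moving `s_i` back to the points
gives `∑ |P_i| dist(s_i, Γ*)^z ≤ B cost_z(P, S) + G cost_z(P, Γ*)`. The hypothesis on `C` links
these two sums once the weights `|P_i|` are replaced by `n_i` and back; since all distances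
within `Y` are at most `1`, each replacement costs at most `k' e`.
-/

open Metric

noncomputable def clusterCost {X : Type*} [PseudoMetricSpace X] (z : ℕ) (Q : Multiset X)
    (S : Set X) : ℝ :=
  (Q.map fun p => infDist p S ^ z).sum

lemma add_pow_succ_le_of_inv_add_inv_eq_one {c d : ℝ} (hc : 0 < c) (hd : 0 < d)
    (hcd : c⁻¹ + d⁻¹ = 1) {a b : ℝ} (ha : 0 ≤ a) (hb : 0 ≤ b) (w : ℕ) :
    (a + b) ^ (w + 1) ≤ c ^ w * a ^ (w + 1) + d ^ w * b ^ (w + 1) := by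
  have hconv := (convexOn_pow (w + 1)).2 (Set.mem_Ici.2 (mul_nonneg hc.le ha))
    (Set.mem_Ici.2 (mul_nonneg hd.le hb)) (inv_nonneg.2 hc.le) (inv_nonneg.2 hd.le) hcd
  have hscale : ∀ {r : ℝ}, 0 < r → ∀ x : ℝ, r⁻¹ * (r * x) ^ (w + 1) = r ^ w * x ^ (w + 1) :=
    fun hr x => by rw [mul_pow, pow_succ]; field_simp
  simpa only [smul_eq_mul, inv_mul_cancel_left₀ hc.ne', inv_mul_cancel_left₀ hd.ne',
    hscale hc, hscale hd] using hconv

lemma add_pow_succ_le {α : ℝ} (hα : 0 < α) {a b : ℝ} (ha : 0 ≤ a) (hb : 0 ≤ b) (w : ℕ) :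
    (a + b) ^ (w + 1) ≤ (1 + 1 / α) ^ w * a ^ (w + 1) + (1 + α) ^ w * b ^ (w + 1) :=
  add_pow_succ_le_of_inv_add_inv_eq_one (by positivity) (by positivity)
    (by field_simp; ring) ha hb w

section ClusterCost

variable {X : Type*} [PseudoMetricSpace X]

lemma infDist_pow_succ_le {α : ℝ} (hα : 0 < α) (w : ℕ) (S : Set X) (x y : X) :
    infDist x S ^ (w + 1)
      ≤ (1 + 1 / α) ^ w * dist x y ^ (w + 1) + (1 + α) ^ w * infDist y S ^ (w + 1) :=
  calc infDist x S ^ (w + 1) ≤ (dist x y + infDist y S) ^ (w + 1) := by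
        gcongr
        · exact infDist_nonneg
        · linarith [infDist_le_infDist_add_dist (s := S) (x := x) (y := y)]
    _ ≤ _ := add_pow_succ_le hα dist_nonneg infDist_nonneg w

lemma infDist_le_one {Y S : Set X} (hY : ∀ x ∈ Y, ∀ y ∈ Y, dist x y ≤ 1) (hSY : S ⊆ Y)
    {x : X} (hx : x ∈ Y) : infDist x S ≤ 1 := by
  rcases S.eq_empty_or_nonempty with rfl | ⟨y, hy⟩
  · simp
  · exact (infDist_le_dist_of_mem hy).trans (hY x hx y (hSY hy))

lemma clusterCost_sum {ι : Type*} (z : ℕ) (t : Finset ι) (Q : ι → Multiset X) (S : Set X) :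
    clusterCost z (∑ i ∈ t, Q i) S = ∑ i ∈ t, clusterCost z (Q i) S := by
  rw [clusterCost, ← Multiset.coe_mapAddMonoidHom, map_sum, ← Multiset.coe_sumAddMonoidHom,
    map_sum]
  rfl

variable {α : ℝ} (hα : 0 < α) (w : ℕ) {Q : Multiset X} {c : X} {T : Set X}
  (hVoronoi : ∀ p ∈ Q, dist p c = infDist p T) (S : Set X)
include hα hVoronoi

lemma clusterCost_le_of_voronoi :
    clusterCost (w + 1) Q S
      ≤ (1 + 1 / α) ^ w * clusterCost (w + 1) Q T
        + (1 + α) ^ w * (Q.card * infDist c S ^ (w + 1)) := by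
  calc clusterCost (w + 1) Q S
      ≤ (Q.map fun p => (1 + 1 / α) ^ w * infDist p T ^ (w + 1)
          + (1 + α) ^ w * infDist c S ^ (w + 1)).sum :=
        Multiset.sum_map_le_sum_map _ _ fun p hp =>
          hVoronoi p hp ▸ infDist_pow_succ_le hα w S p c
    _ = _ := by simp [Multiset.sum_map_add, Multiset.sum_map_mul_left, clusterCost]; ring

lemma card_mul_infDist_pow_le_of_voronoi :
    Q.card * infDist c S ^ (w + 1)
      ≤ (1 + 1 / α) ^ w * clusterCost (w + 1) Q T
        + (1 + α) ^ w * clusterCost (w + 1) Q S := by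
  calc (Q.card : ℝ) * infDist c S ^ (w + 1) = (Q.map fun _ => infDist c S ^ (w + 1)).sum := by
        simp
    _ ≤ (Q.map fun p => (1 + 1 / α) ^ w * infDist p T ^ (w + 1)
          + (1 + α) ^ w * infDist p S ^ (w + 1)).sum :=
        Multiset.sum_map_le_sum_map _ _ fun p hp =>
          hVoronoi p hp ▸ dist_comm c p ▸ infDist_pow_succ_le hα w S c p
    _ = _ := by simp [Multiset.sum_map_add, Multiset.sum_map_mul_left, clusterCost]

end ClusterCost

lemma sum_mul_le_sum_mul_add {ι : Type*} (t : Finset ι) {a b d : ι → ℝ} {e : ℝ}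
    (hab : ∀ i ∈ t, |a i - b i| ≤ e) (hd0 : ∀ i ∈ t, 0 ≤ d i) (hd1 : ∀ i ∈ t, d i ≤ 1) :
    ∑ i ∈ t, a i * d i ≤ ∑ i ∈ t, b i * d i + t.card * e := by
  rw [← nsmul_eq_mul, ← Finset.sum_const, ← Finset.sum_add_distrib]
  refine Finset.sum_le_sum fun i hi => ?_
  have h := abs_le.1 (hab i hi)
  nlinarith [hd0 i hi, hd1 i hi]

theorem bicriteria_to_proper_general {X : Type*} [MetricSpace X] (Y : Set X)
    (hY : ∀ x ∈ Y, ∀ y ∈ Y, dist x y ≤ 1)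
    (z k' : ℕ) (hz : 1 ≤ z)
    (α : ℝ) (hα : 0 < α)
    (e M A M' : ℝ) (hM' : 0 ≤ M')
    (Pi : Fin k' → Multiset X)
    (s : Fin k' → X) (hs : ∀ i, s i ∈ Y)
    (hVoronoi : ∀ i, ∀ p ∈ Pi i, dist p (s i) = Metric.infDist p (Set.range s))
    (Γstar : Finset X) (hΓY : ↑Γstar ⊆ Y)
    (hScost : ((∑ i, Pi i).map (fun p => Metric.infDist p (Set.range s) ^ z)).sum
        ≤ M * ((∑ i, Pi i).map
            (fun p => Metric.infDist p (↑Γstar : Set X) ^ z)).sum + A)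
    (n : Fin k' → ℝ)
    (hne : ∀ i, |n i - ((Pi i).card : ℝ)| ≤ e)
    (C : Finset X) (hCY : ↑C ⊆ Y)
    (hC : ∑ i, n i * Metric.infDist (s i) (↑C : Set X) ^ z
        ≤ M' * ∑ i, n i * Metric.infDist (s i) (↑Γstar : Set X) ^ z) :
    ((∑ i, Pi i).map (fun p => Metric.infDist p (↑C : Set X) ^ z)).sum
      ≤ (1 + 1 / α) ^ (z - 1) * (1 + (1 + α) ^ (z - 1) * M')
            * (M * ((∑ i, Pi i).map
                (fun p => Metric.infDist p (↑Γstar : Set X) ^ z)).sum + A)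
        + (1 + α) ^ (2 * (z - 1)) * M'
            * ((∑ i, Pi i).map
                (fun p => Metric.infDist p (↑Γstar : Set X) ^ z)).sum
        + (1 + α) ^ (z - 1) * (M' + 1) * k' * e := by
  obtain ⟨w, rfl⟩ : ∃ w, z = w + 1 := ⟨z - 1, by omega⟩
  simp only [Nat.add_sub_cancel, pow_mul']
  set B := (1 + 1 / α) ^ w
  set G := (1 + α) ^ w
  have hdist : ∀ S : Set X, S ⊆ Y → ∀ i, infDist (s i) S ^ (w + 1) ≤ 1 := fun S hS i =>
    pow_le_one₀ infDist_nonneg (infDist_le_one hY hS (hs i))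
  have hmoveC := Finset.sum_le_sum (s := .univ) fun i _ =>
    clusterCost_le_of_voronoi hα w (hVoronoi i) C
  have hweightC := sum_mul_le_sum_mul_add Finset.univ (fun i _ => abs_sub_comm (n i) _ ▸ hne i)
    (fun i _ => pow_nonneg infDist_nonneg _) (fun i _ => hdist C hCY i)
  have hweightΓ := sum_mul_le_sum_mul_add Finset.univ (fun i _ => hne i)
    (fun i _ => pow_nonneg infDist_nonneg _) (fun i _ => hdist Γstar hΓY i)
  have hmoveΓ := Finset.sum_le_sum (s := .univ) fun i _ =>
    card_mul_infDist_pow_le_of_voronoi hα w (hVoronoi i) Γstar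
  simp only [Finset.sum_add_distrib, ← Finset.mul_sum, ← clusterCost_sum, Finset.card_univ,
    Fintype.card_fin] at hmoveC hweightC hweightΓ hmoveΓ
  simp only [clusterCost] at hmoveC hmoveΓ
  have hG : 0 ≤ G := by positivity
  have hGM' : 0 ≤ G * M' := by positivity
  have hBG : 0 ≤ B * (1 + G * M') := by positivity
  linarith [mul_le_mul_of_nonneg_left hweightC hG, mul_le_mul_of_nonneg_left hC hG,
    mul_le_mul_of_nonneg_left hweightΓ hGM', mul_le_mul_of_nonneg_left hmoveΓ hGM',
    mul_le_mul_of_nonneg_left hScost hBG]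

/-- **From bi-criteria to proper solutions.** Let `Y` be a subset of a metric space `X`
of diameter at most `1`, let `z ≥ 1`, `k, k' ≥ 1` be integers, `α > 0`, and
`e, M, A, M' ≥ 0`.  Let `P = P_1 ⊔ … ⊔ P_{k'}` be a finite multiset of points of `Y`
partitioned into the Voronoi clusters of the centers `S = {s_1, …, s_{k'}} ⊆ Y` (i.e.
`dist(p, s_i) = dist(p, S)` for every `p ∈ P_i`).  Let `Γ* ⊆ Y` with `|Γ*| = k` satisfy
`cost_z(P, S) ≤ M·cost_z(P, Γ*) + A`, let `n_1, …, n_{k'} ≥ 0` be reals with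
`|n_i − |P_i|| ≤ e`, and let `C ⊆ Y` with `|C| = k` satisfy
`∑_i n_i·dist(s_i, C)^z ≤ M'·∑_i n_i·dist(s_i, Γ*)^z`.  Then
`cost_z(P, C) ≤ (1+1/α)^{z−1}·(1 + (1+α)^{z−1}·M')·(M·cost_z(P, Γ*) + A)
  + (1+α)^{2(z−1)}·M'·cost_z(P, Γ*) + (1+α)^{z−1}·(M'+1)·k'·e`. -/
theorem bicriteria_to_proper {X : Type*} [MetricSpace X] (Y : Set X)
    (hY : ∀ x ∈ Y, ∀ y ∈ Y, dist x y ≤ 1)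
    (z k k' : ℕ) (hz : 1 ≤ z) (hk : 1 ≤ k) (hk' : 1 ≤ k')
    (α : ℝ) (hα : 0 < α)
    (e M A M' : ℝ) (he : 0 ≤ e) (hM : 0 ≤ M) (hA : 0 ≤ A) (hM' : 0 ≤ M')
    (Pi : Fin k' → Multiset X) (hPY : ∀ i, ∀ p ∈ Pi i, p ∈ Y)
    (s : Fin k' → X) (hs : ∀ i, s i ∈ Y)
    (hVoronoi : ∀ i, ∀ p ∈ Pi i, dist p (s i) = Metric.infDist p (Set.range s))
    (Γstar : Finset X) (hΓY : ↑Γstar ⊆ Y) (hΓcard : Γstar.card = k)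
    (hScost : ((∑ i, Pi i).map (fun p => Metric.infDist p (Set.range s) ^ z)).sum
        ≤ M * ((∑ i, Pi i).map
            (fun p => Metric.infDist p (↑Γstar : Set X) ^ z)).sum + A)
    (n : Fin k' → ℝ) (hn0 : ∀ i, 0 ≤ n i)
    (hne : ∀ i, |n i - ((Pi i).card : ℝ)| ≤ e)
    (C : Finset X) (hCY : ↑C ⊆ Y) (hCcard : C.card = k)
    (hC : ∑ i, n i * Metric.infDist (s i) (↑C : Set X) ^ z
        ≤ M' * ∑ i, n i * Metric.infDist (s i) (↑Γstar : Set X) ^ z) :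
    ((∑ i, Pi i).map (fun p => Metric.infDist p (↑C : Set X) ^ z)).sum
      ≤ (1 + 1 / α) ^ (z - 1) * (1 + (1 + α) ^ (z - 1) * M')
            * (M * ((∑ i, Pi i).map
                (fun p => Metric.infDist p (↑Γstar : Set X) ^ z)).sum + A)
        + (1 + α) ^ (2 * (z - 1)) * M'
            * ((∑ i, Pi i).map
                (fun p => Metric.infDist p (↑Γstar : Set X) ^ z)).sum
        + (1 + α) ^ (z - 1) * (M' + 1) * k' * e :=
  bicriteria_to_proper_general Y hY z k' hz α hα e M A M' hM' Pi s hs hVoronoi Γstar hΓY hScost n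
    hne C hCY hC
end
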